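/- arXiv:2402.09254 — 4 statements merged into one kernel-verified Lean document; each statement's English description precedes it below -/
import Mathlib

section
/- Let G be a graph on n ≥ 3 vertices and let f : (unordered pairs of V(G)) → ℕ be a function such that for all vertices u, v there exist f(u,v) internally vertex-disjoint paths of length at least 2 connecting u and v. Then e(G) ≥ ⌈w(f)/(n−2)⌉, where w(f) is the sum of f(u,v) over all unordered pairs {u,v}. -/
/-! A super-path from `u` to `v` leaves `u` through a neighbour other than `v`, and internally
disjoint super-paths leave through distinct neighbours; hence `f(u,v) ≤ |N(u) \ {v}|`.
Summing over ordered pairs `u ≠ v` counts every unordered pair twice on the left and gives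
`∑_u (n - 2) deg u = 2 (n - 2) e(G)` on the right, so `w(f) ≤ (n - 2) e(G)`. -/

open SimpleGraph Finset

variable {V : Type*}

/-- A graph is `k`-connected if it has at least `k+1` vertices and removing any
set of at most `k-1` vertices leaves it connected. -/
def KConnected [Fintype V] (G : SimpleGraph V) (k : ℕ) : Prop :=
  k + 1 ≤ Fintype.card V ∧
    ∀ U : Finset V, U.card ≤ k - 1 → (G.induce ((↑U : Set V)ᶜ)).Connected

/-- Two walks from `u` to `v` are internally disjoint if they share only `u` and `v`. -/
def InternallyDisjoint {G : SimpleGraph V} {u v : V} (p q : G.Walk u v) : Prop :=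
  ∀ x : V, x ∈ p.support → x ∈ q.support → x = u ∨ x = v

/-- A walk is monochromatic under an edge-colouring `c` if all its edges get one colour. -/
def Monochromatic {G : SimpleGraph V} (c : Sym2 V → ℕ) {u v : V} (p : G.Walk u v) : Prop :=
  ∃ col : ℕ, ∀ e ∈ p.edges, c e = col

/-- There exist `m` pairwise internally disjoint super-paths (paths of length ≥ 2)
connecting `u` and `v`. -/
def HasDisjointSuperPaths (G : SimpleGraph V) (u v : V) (m : ℕ) : Prop :=
  ∃ P : Fin m → G.Walk u v,
    (∀ i, (P i).IsPath ∧ 2 ≤ (P i).length) ∧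
    Pairwise (fun i j => InternallyDisjoint (P i) (P j))

/-- There exist `m` pairwise internally disjoint monochromatic super-paths
connecting `u` and `v`. -/
def HasDisjointMonoSuperPaths (G : SimpleGraph V) (c : Sym2 V → ℕ) (u v : V) (m : ℕ) : Prop :=
  ∃ P : Fin m → G.Walk u v,
    (∀ i, (P i).IsPath ∧ 2 ≤ (P i).length ∧ Monochromatic c (P i)) ∧
    Pairwise (fun i j => InternallyDisjoint (P i) (P j))

/-- An edge-colouring is monochromatic `k`-connected if any two distinct vertices are
connected by `k` pairwise internally disjoint monochromatic paths. -/
def MonoKConnected (G : SimpleGraph V) (k : ℕ) (c : Sym2 V → ℕ) : Prop :=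
  ∀ u v : V, u ≠ v → ∃ P : Fin k → G.Walk u v,
    (∀ i, (P i).IsPath ∧ Monochromatic c (P i)) ∧
    Pairwise (fun i j => InternallyDisjoint (P i) (P j))

/-- The monochromatic `k`-connection number: the maximum number of colours in a
monochromatic `k`-connected edge-colouring. -/
noncomputable def mck (G : SimpleGraph V) (k : ℕ) : ℕ :=
  sSup {r : ℕ | ∃ c : Sym2 V → ℕ, MonoKConnected G k c ∧ (c '' G.edgeSet).ncard = r}

open Classical in
/-- `m_G(u,v)`: `min(deg u, deg v) - 1` if `uv` is an edge, `min(deg u, deg v)` otherwise. -/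
noncomputable def mDeg (G : SimpleGraph V) (u v : V) : ℕ :=
  if G.Adj u v then min (G.neighborSet u).ncard (G.neighborSet v).ncard - 1
  else min (G.neighborSet u).ncard (G.neighborSet v).ncard

theorem Finset.sum_sum_erase_sym2_mk {α M : Type*} [Fintype α] [DecidableEq α]
    [AddCommMonoid M] (f : Sym2 α → M) :
    ∑ u, ∑ v ∈ univ.erase u, f s(u, v) =
      2 • ∑ e ∈ univ.filter (fun e : Sym2 α => ¬ e.IsDiag), f e := by
  have hmaps : ∀ p ∈ (univ : Finset α).offDiag,
      s(p.1, p.2) ∈ univ.filter (fun e : Sym2 α => ¬ e.IsDiag) :=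
    fun p hp => mem_filter.2 ⟨mem_univ _, not_isDiag_mk_of_mem_offDiag hp⟩
  calc ∑ u, ∑ v ∈ univ.erase u, f s(u, v)
        = ∑ p ∈ (univ : Finset α).offDiag, f s(p.1, p.2) :=
        (sum_finset_product' _ _ _ fun p => by simp [eq_comm]).symm
    _ = ∑ e ∈ univ.filter (fun e : Sym2 α => ¬ e.IsDiag),
          ∑ p ∈ univ.offDiag with s(p.1, p.2) = e, f s(p.1, p.2) :=
        (sum_fiberwise_of_maps_to hmaps _).symm
    _ = ∑ e ∈ univ.filter (fun e : Sym2 α => ¬ e.IsDiag), 2 • f e := by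
        refine sum_congr rfl fun e he => ?_
        induction e using Sym2.ind with | _ a b => ?_
        have hab : a ≠ b := by simpa using he
        have hfiber : ((univ : Finset α).offDiag.filter fun p => s(p.1, p.2) = s(a, b)) =
            {(a, b), (b, a)} := by
          ext ⟨x, y⟩; aesop
        rw [hfiber, sum_pair (by simpa using fun h _ => hab h), Sym2.eq_swap, two_nsmul]
    _ = 2 • ∑ e ∈ univ.filter (fun e : Sym2 α => ¬ e.IsDiag), f e := (smul_sum ..).symm

lemma SimpleGraph.Walk.IsPath.snd_ne_of_two_le_length {G : SimpleGraph V} {u v : V}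
    {p : G.Walk u v} (hp : p.IsPath) (hl : 2 ≤ p.length) : p.snd ≠ v := by
  intro h
  have := hp.getVert_injOn (by simp; omega) (le_refl p.length) (h.trans p.getVert_length.symm)
  omega

lemma HasDisjointSuperPaths.le_card_neighborFinset_erase [DecidableEq V] {G : SimpleGraph V}
    [G.LocallyFinite] {u v : V} {m : ℕ} (h : HasDisjointSuperPaths G u v m) :
    m ≤ #((G.neighborFinset u).erase v) := by
  obtain ⟨P, hP, hdisj⟩ := h
  have hnil i : ¬ (P i).Nil := Walk.not_nil_iff_lt_length.2 (by have := (hP i).2; omega)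
  have hsnd_ne_u i : (P i).snd ≠ u := ((P i).adj_snd (hnil i)).ne.symm
  have hsnd_ne_v i : (P i).snd ≠ v := (hP i).1.snd_ne_of_two_le_length (hP i).2
  have hinj : Function.Injective fun i => (P i).snd := by
    intro i j (hij : (P i).snd = (P j).snd)
    by_contra hne
    have hj : (P i).snd ∈ (P j).support := hij ▸ (P j).getVert_mem_support 1
    rcases hdisj hne _ ((P i).getVert_mem_support 1) hj with h | h
    exacts [hsnd_ne_u i h, hsnd_ne_v i h]
  have hmaps i : (P i).snd ∈ (G.neighborFinset u).erase v :=
    mem_erase.2 ⟨hsnd_ne_v i, (mem_neighborFinset _ _ _).2 ((P i).adj_snd (hnil i))⟩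
  simpa using card_le_card_of_injOn (s := univ) _ (fun i _ => hmaps i) hinj.injOn

lemma SimpleGraph.sum_card_neighborFinset_erase [Fintype V] [DecidableEq V]
    (G : SimpleGraph V) [DecidableRel G.Adj] (u : V) :
    ∑ v ∈ univ.erase u, #((G.neighborFinset u).erase v) =
      (Fintype.card V - 2) * G.degree u := by
  have hcount := sum_card_bipartiteAbove_eq_sum_card_bipartiteBelow (s := univ.erase u)
    (t := G.neighborFinset u) (r := fun v w => w ≠ v)
  simp only [bipartiteAbove, bipartiteBelow, filter_ne', filter_ne] at hcount
  rw [hcount, ← card_neighborFinset_eq_degree, mul_comm, ← smul_eq_mul, ← sum_const]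
  refine sum_congr rfl fun w hw => ?_
  have hwu : w ≠ u := (G.ne_of_adj ((mem_neighborFinset _ _ _).1 hw)).symm
  rw [card_erase_of_mem (by simpa using hwu), card_erase_of_mem (mem_univ u), card_univ]
  omega

lemma SimpleGraph.sum_le_mul_card_edgeFinset_of_hasDisjointSuperPaths [Fintype V]
    [DecidableEq V] (G : SimpleGraph V) [DecidableRel G.Adj] (f : Sym2 V → ℕ)
    (hf : ∀ u v : V, u ≠ v → HasDisjointSuperPaths G u v (f s(u, v))) :
    ∑ e ∈ univ.filter (fun e : Sym2 V => ¬ e.IsDiag), f e ≤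
      (Fintype.card V - 2) * #G.edgeFinset := by
  refine Nat.le_of_mul_le_mul_left ?_ two_pos
  calc 2 * ∑ e ∈ univ.filter (fun e : Sym2 V => ¬ e.IsDiag), f e
      = ∑ u, ∑ v ∈ univ.erase u, f s(u, v) := (sum_sum_erase_sym2_mk f).symm
    _ ≤ ∑ u, ∑ v ∈ univ.erase u, #((G.neighborFinset u).erase v) :=
        sum_le_sum fun u _ => sum_le_sum fun v hv =>
          (hf u v (ne_of_mem_erase hv).symm).le_card_neighborFinset_erase
    _ = ∑ u, (Fintype.card V - 2) * G.degree u := by simp_rw [G.sum_card_neighborFinset_erase]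
    _ = 2 * ((Fintype.card V - 2) * #G.edgeFinset) := by
        rw [← mul_sum, sum_degrees_eq_twice_card_edges]; ring

theorem stmt1 [Fintype V] [DecidableEq V] (G : SimpleGraph V) (hn : 3 ≤ Fintype.card V)
    (f : Sym2 V → ℕ)
    (hf : ∀ u v : V, u ≠ v → HasDisjointSuperPaths G u v (f s(u, v))) :
    ⌈((∑ e ∈ Finset.univ.filter (fun e : Sym2 V => ¬ e.IsDiag), f e : ℕ) : ℚ) /
        ((Fintype.card V : ℚ) - 2)⌉ ≤ (G.edgeSet.ncard : ℤ) := by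
  classical
  have hweight := G.sum_le_mul_card_edgeFinset_of_hasDisjointSuperPaths f hf
  have hn' : (3 : ℚ) ≤ Fintype.card V := by exact_mod_cast hn
  rw [← coe_edgeFinset, Set.ncard_coe_finset, Int.ceil_le, div_le_iff₀ (by linarith)]
  calc ((∑ e ∈ univ.filter (fun e : Sym2 V => ¬ e.IsDiag), f e : ℕ) : ℚ)
      ≤ ((Fintype.card V - 2 : ℕ) : ℚ) * #G.edgeFinset := by exact_mod_cast hweight
    _ = _ := by push_cast [Nat.cast_sub (by omega : 2 ≤ Fintype.card V)]; ring
end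

section
/- Let G be a graph on n vertices with degree sequence d_1 ≤ d_2 ≤ ⋯ ≤ d_n, and define m_G(u,v) = min(deg(u),deg(v)) − 1 if uv is an edge and min(deg(u),deg(v)) otherwise. Then 2·Σ_{ {u,v} } m_G(u,v) = 2(n−2)e(G) − Σ_{i=1}^{⌊n/2⌋} (n−2i+1)(d_{n+1−i} − d_i). -/
open SimpleGraph Finset

variable {V : Type*}

/-!
Adding `[uv ∈ E]` to `m_G(u,v)` gives `min(deg u, deg v)`, so the sum of `m_G` over ordered pairs
plus `2e(G)` is `∑_{i ≠ j} min(d_i, d_j) = 2 ∑_i (n-1-i) d_i` for the sorted sequence. Since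
`2(n-1-i) = (n-1) - (2i+1-n)` and `∑ d_i = 2e(G)`, it remains to see that `∑_i (2i+1-n) d_i`
is the spread term; this follows by pairing `i` with `n-1-i`, whose weights are opposite.
-/

namespace SimpleGraph

variable {V : Type*} (G : SimpleGraph V)

theorem ncard_neighborSet_eq_degree (v : V) [Fintype (G.neighborSet v)] :
    (G.neighborSet v).ncard = G.degree v := by
  rw [Set.ncard_eq_toFinset_card', ← card_neighborSet_eq_degree, Set.toFinset_card]

theorem ncard_edgeSet_eq_card_edgeFinset [Fintype G.edgeSet] :
    G.edgeSet.ncard = #G.edgeFinset := by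
  rw [← coe_edgeFinset, Set.ncard_coe_finset]

theorem mDeg_add_ite_adj [G.LocallyFinite] [DecidableRel G.Adj] (u v : V) :
    mDeg G u v + (if G.Adj u v then 1 else 0) = min (G.degree u) (G.degree v) := by
  simp only [mDeg, ncard_neighborSet_eq_degree]
  split_ifs with h
  · have hu := G.degree_pos_iff_exists_adj u |>.2 ⟨v, h⟩
    have hv := G.degree_pos_iff_exists_adj v |>.2 ⟨u, h.symm⟩
    omega
  · rfl

theorem sum_offDiag_ite_adj [Fintype V] [DecidableEq V] [DecidableRel G.Adj] :
    ∑ p ∈ univ.offDiag, (if G.Adj p.1 p.2 then 1 else 0) = 2 * #G.edgeFinset := by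
  rw [← sum_degrees_eq_twice_card_edges,
    sum_finset_product _ univ (fun u => univ.erase u) (by simp [and_comm, eq_comm])]
  refine sum_congr rfl fun u _ => ?_
  rw [sum_erase (f := fun v => if G.Adj u v then 1 else 0) _ (if_neg G.irrefl), sum_boole,
    ← card_neighborFinset_eq_degree, neighborFinset_eq_filter, Nat.cast_id]

end SimpleGraph

theorem Monotone.sum_offDiag_min {ι M : Type*} [Fintype ι] [LinearOrder ι]
    [LocallyFiniteOrderTop ι] [LocallyFiniteOrderBot ι] [AddCommMonoid M] [LinearOrder M]
    {f : ι → M} (hf : Monotone f) :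
    ∑ p ∈ univ.offDiag, min (f p.1) (f p.2) = 2 • ∑ i, #(Ioi i) • f i := by
  have h_lt :
      ∑ p ∈ univ.offDiag with p.1 < p.2, min (f p.1) (f p.2) = ∑ i, #(Ioi i) • f i := by
    rw [sum_finset_product _ univ Ioi (by grind)]
    exact sum_congr rfl fun i _ => by
      rw [← sum_const]; exact sum_congr rfl fun j hj => min_eq_left (hf (mem_Ioi.1 hj).le)
  have h_gt :
      ∑ p ∈ univ.offDiag with ¬p.1 < p.2, min (f p.1) (f p.2) = ∑ i, #(Ioi i) • f i := by
    rw [sum_finset_product _ univ Iio (by grind), sum_comm' (t' := univ) (s' := Ioi) (by simp)]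
    exact sum_congr rfl fun i _ => by
      rw [← sum_const]; exact sum_congr rfl fun j hj => min_eq_right (hf (mem_Ioi.1 hj).le)
  rw [← sum_filter_add_sum_filter_not _ (fun p => p.1 < p.2), h_lt, h_gt, two_nsmul]

theorem sum_range_two_mul_add_one_sub_mul {R : Type*} [CommRing R] (n : ℕ) (f : ℕ → R) :
    ∑ i ∈ range n, (2 * i + 1 - n : R) * f i =
      ∑ i ∈ range (n / 2), (n - 2 * i - 1 : R) * (f (n - 1 - i) - f i) := by
  induction n using Nat.twoStepInduction generalizing f with
  | zero => simp
  | one => simp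
  | more n ih _ =>
    have h_inner := ih fun i => f (i + 1)
    rw [sum_congr rfl fun i (hi : i ∈ range (n / 2)) => by
      rw [show n - 1 - i + 1 = n - i by grind]] at h_inner
    rw [sum_range_succ', sum_range_succ, show (n + 2) / 2 = n / 2 + 1 by omega, sum_range_succ']
    push_cast
    have h_weight (x : R) : 2 * (x + 1) + 1 - (n + 2) = 2 * x + 1 - n := by ring
    have h_weight' (x : R) : n + 2 - 2 * (x + 1) - 1 = n - 2 * x - 1 := by ring
    simp only [h_weight, h_weight', h_inner]
    ring

theorem two_mul_sum_range_add_sum_range_half {n : ℕ} {d : ℕ → ℕ}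
    (hmono : ∀ i j : ℕ, i ≤ j → j < n → d i ≤ d j) :
    2 * ∑ i ∈ range n, (n - 1 - i) * d i
        + ∑ i ∈ range (n / 2), (n - 2 * (i + 1) + 1) * (d (n - (i + 1)) - d i)
      = (n - 1) * ∑ i ∈ range n, d i := by
  have h_half :
      ((∑ i ∈ range (n / 2), (n - 2 * (i + 1) + 1) * (d (n - (i + 1)) - d i) : ℕ) : ℤ)
        = ∑ i ∈ range n, (2 * i + 1 - n : ℤ) * d i := by
    rw [sum_range_two_mul_add_one_sub_mul, Nat.cast_sum]
    refine sum_congr rfl fun i hi => ?_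
    have h2i : 2 * (i + 1) ≤ n := by grind
    rw [show n - 1 - i = n - (i + 1) by omega, Nat.cast_mul,
      Nat.cast_sub (hmono i _ (by omega) (by omega))]
    push_cast [Nat.cast_sub h2i]
    ring
  have h_low : ((∑ i ∈ range n, (n - 1 - i) * d i : ℕ) : ℤ)
      = ∑ i ∈ range n, (n - 1 - i : ℤ) * d i := by
    rw [Nat.cast_sum]
    exact sum_congr rfl fun i hi => by grind
  rcases Nat.eq_zero_or_pos n with rfl | hn
  · simp
  rw [← Nat.cast_inj (R := ℤ), Nat.cast_add, Nat.cast_mul, Nat.cast_mul, h_half, h_low,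
    Nat.cast_sub hn, Nat.cast_sum, Nat.cast_ofNat, Nat.cast_one, mul_sum, mul_sum,
    ← sum_add_distrib]
  exact sum_congr rfl fun i _ => by ring

theorem stmt4_general [Fintype V] [DecidableEq V] (G : SimpleGraph V) (n : ℕ)
    (d : ℕ → ℕ)
    (hmono : ∀ i j : ℕ, i ≤ j → j < n → d i ≤ d j)
    (σ : V ≃ Fin n) (hd : ∀ v : V, (G.neighborSet v).ncard = d (σ v)) :
    (∑ p ∈ Finset.univ.offDiag, mDeg G p.1 p.2)
        + ∑ i ∈ Finset.range (n / 2), (n - 2 * (i + 1) + 1) * (d (n - (i + 1)) - d i)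
      = 2 * (n - 2) * G.edgeSet.ncard := by
  classical
  have hd_mono : Monotone fun i : Fin n => d i := fun i j hij => hmono i j hij j.2
  have hdeg (v : V) : G.degree v = d (σ v) := (G.ncard_neighborSet_eq_degree v).symm.trans (hd v)
  have h_sum_d : ∑ i ∈ range n, d i = 2 * #G.edgeFinset := by
    rw [← sum_degrees_eq_twice_card_edges, ← Fin.sum_univ_eq_sum_range, ← σ.sum_comp]
    simp only [hdeg]
  have h_min : ∑ p ∈ univ.offDiag, mDeg G p.1 p.2 + 2 * #G.edgeFinset
      = 2 * ∑ i ∈ range n, (n - 1 - i) * d i := by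
    rw [← G.sum_offDiag_ite_adj, ← sum_add_distrib]
    simp only [mDeg_add_ite_adj, hdeg]
    rw [sum_equiv (σ.prodCongr σ) (t := univ.offDiag)
        (g := fun p : Fin n × Fin n => min (d p.1) (d p.2)) (by simp) (by simp),
      hd_mono.sum_offDiag_min, ← Fin.sum_univ_eq_sum_range]
    simp only [Fin.card_Ioi, smul_eq_mul]
  have h_deg_seq := two_mul_sum_range_add_sum_range_half hmono
  rw [h_sum_d] at h_deg_seq
  rw [G.ncard_edgeSet_eq_card_edgeFinset]
  generalize ∑ i ∈ range n, (n - 1 - i) * d i = S at h_min h_deg_seq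
  generalize ∑ i ∈ range (n / 2), (n - 2 * (i + 1) + 1) * (d (n - (i + 1)) - d i) = T at *
  generalize ∑ p ∈ univ.offDiag, mDeg G p.1 p.2 = A at *
  -- `n - 1` and `n - 2` truncate, so `n = 0, 1` are separate cases.
  obtain _ | _ | k := n <;> simp only [zero_tsub, Nat.add_sub_cancel] at h_deg_seq ⊢ <;> lia

theorem stmt4 [Fintype V] [DecidableEq V] (G : SimpleGraph V) (n : ℕ)
    (hn : n = Fintype.card V) (d : ℕ → ℕ)
    (hmono : ∀ i j : ℕ, i ≤ j → j < n → d i ≤ d j)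
    (σ : V ≃ Fin n) (hd : ∀ v : V, (G.neighborSet v).ncard = d (σ v)) :
    (∑ p ∈ Finset.univ.offDiag, mDeg G p.1 p.2)
        + ∑ i ∈ Finset.range (n / 2), (n - 2 * (i + 1) + 1) * (d (n - (i + 1)) - d i)
      = 2 * (n - 2) * G.edgeSet.ncard :=
  stmt4_general G n d hmono σ hd
end

section
/- The complete bipartite graph K_{k,k} satisfies mc_k(K_{k,k}) = 1: every monochromatic k-connected edge-colouring of K_{k,k} uses only one colour. -/
open SimpleGraph Finset

variable {V : Type*}

/-! Two vertices `u, v` on the same side of `K_{k,k}` have exactly `k` neighbours, so `k`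
internally disjoint `u`–`v` paths must leave `u` through every neighbour and enter `v` through
every neighbour. A common neighbour `x` is internal to a unique path, which therefore contains
both `ux` and `xv`; monochromaticity makes these two edges the same colour, and chaining such
equalities shows that all edges get one colour. Conversely the constant colouring works because
`K_{k,k}` has `k` internally disjoint paths between any two vertices. -/

section Walks

variable {G : SimpleGraph V} {u v : V} {ι : Type*}

lemma InternallyDisjoint.reverse {p q : G.Walk u v} (h : InternallyDisjoint p q) :
    InternallyDisjoint p.reverse q.reverse := fun x hp hq =>
  (h x (by simpa using hp) (by simpa using hq)).symm

lemma eq_of_mem_support_of_internallyDisjoint {P : ι → G.Walk u v}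
    (hP : Pairwise fun i j => InternallyDisjoint (P i) (P j)) {i j : ι} {x : V}
    (hi : x ∈ (P i).support) (hj : x ∈ (P j).support) (hxu : x ≠ u) (hxv : x ≠ v) :
    i = j := by
  by_contra hij
  exact (hP hij x hi hj).elim hxu hxv

lemma exists_snd_eq_of_ncard_neighborSet_le [Finite V] {P : ι → G.Walk u v}
    (hP : Pairwise fun i j => InternallyDisjoint (P i) (P j)) (hne : u ≠ v) (hnadj : ¬G.Adj u v)
    (hdeg : (G.neighborSet u).ncard ≤ Nat.card ι) {x : V} (hx : G.Adj u x) :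
    ∃ i, (P i).snd = x := by
  have hadj i : G.Adj u (P i).snd := Walk.adj_snd (Walk.not_nil_of_ne hne)
  have hinj : Function.Injective fun i => (P i).snd := fun i j (hij : (P i).snd = (P j).snd) =>
    eq_of_mem_support_of_internallyDisjoint hP ((P i).getVert_mem_support 1)
      (hij ▸ (P j).getVert_mem_support 1 : (P i).snd ∈ (P j).support) (hadj i).ne.symm
      fun h => hnadj (h ▸ hadj i)
  have hrange : Set.range (fun i => (P i).snd) = G.neighborSet u :=
    Set.eq_of_subset_of_ncard_le (Set.range_subset_iff.2 hadj)
      (by rwa [Set.ncard_range_of_injective hinj])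
  exact (hrange ▸ hx : x ∈ Set.range fun i => (P i).snd)

lemma colour_eq_of_internallyDisjoint [Finite V] {c : Sym2 V → ℕ} {P : ι → G.Walk u v}
    (hmono : ∀ i, Monochromatic c (P i)) (hP : Pairwise fun i j => InternallyDisjoint (P i) (P j))
    (hne : u ≠ v) (hnadj : ¬G.Adj u v) (hu : (G.neighborSet u).ncard ≤ Nat.card ι)
    (hv : (G.neighborSet v).ncard ≤ Nat.card ι) {x : V} (hux : G.Adj u x) (hxv : G.Adj x v) :
    c s(u, x) = c s(x, v) := by
  obtain ⟨i, hi⟩ := exists_snd_eq_of_ncard_neighborSet_le hP hne hnadj hu hux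
  obtain ⟨j, hj⟩ := exists_snd_eq_of_ncard_neighborSet_le (P := fun i => (P i).reverse)
    (fun i j hij => (hP hij).reverse) hne.symm (fun h => hnadj h.symm) hv hxv.symm
  rw [Walk.snd_reverse] at hj
  obtain rfl : i = j := eq_of_mem_support_of_internallyDisjoint hP
    (hi ▸ (P i).getVert_mem_support 1) (hj ▸ (P j).getVert_mem_support _) hux.ne.symm hxv.ne
  obtain ⟨col, hcol⟩ := hmono i
  have hnil : ¬(P i).Nil := Walk.not_nil_of_ne hne
  calc c s(u, x) = col := hi ▸ hcol _ (Walk.mk_start_snd_mem_edges hnil)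
    _ = c s(x, v) := (hj ▸ hcol _ (Walk.mk_penultimate_end_mem_edges hnil)).symm

lemma MonoKConnected.colour_eq [Finite V] {k : ℕ} {c : Sym2 V → ℕ} (hc : MonoKConnected G k c)
    (hne : u ≠ v) (hnadj : ¬G.Adj u v) (hu : (G.neighborSet u).ncard ≤ k)
    (hv : (G.neighborSet v).ncard ≤ k) {x : V} (hux : G.Adj u x) (hxv : G.Adj x v) :
    c s(u, x) = c s(x, v) := by
  obtain ⟨P, hP, hdisj⟩ := hc u v hne
  exact colour_eq_of_internallyDisjoint (fun i => (hP i).2) hdisj hne hnadj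
    (by rwa [Nat.card_fin]) (by rwa [Nat.card_fin]) hux hxv

lemma exists_internallyDisjoint_paths_of_adj_of_adj {f : ι → V} (hf : Function.Injective f)
    (hne : u ≠ v) (hu : ∀ i, G.Adj u (f i)) (hv : ∀ i, G.Adj (f i) v) :
    ∃ P : ι → G.Walk u v,
      (∀ i, (P i).IsPath) ∧ Pairwise fun i j => InternallyDisjoint (P i) (P j) := by
  refine ⟨fun i => .cons (hu i) (.cons (hv i) .nil), fun i => ?_, fun i j hij x hi hj => ?_⟩
  · simp [Walk.isPath_def, hne, (hu i).ne, (hv i).ne]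
  · simp only [Walk.support_cons, Walk.support_nil, List.mem_cons, List.not_mem_nil,
      or_false] at hi hj
    rcases hi with rfl | rfl | rfl
    · exact .inl rfl
    · rcases hj with h | h | h
      · exact .inl h
      · exact absurd (hf h) hij
      · exact .inr h
    · exact .inr rfl

end Walks

section CompleteBipartite

variable {α β : Type*}

lemma completeBipartiteGraph_neighborSet_inl (a : α) :
    (completeBipartiteGraph α β).neighborSet (Sum.inl a) = Set.range Sum.inr := by
  ext (y | y) <;> simp

lemma completeBipartiteGraph_neighborSet_inr (b : β) :
    (completeBipartiteGraph α β).neighborSet (Sum.inr b) = Set.range Sum.inl := by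
  ext (y | y) <;> simp

lemma completeBipartiteGraph_exists_mk_eq_of_mem_edgeSet {e : Sym2 (α ⊕ β)}
    (he : e ∈ (completeBipartiteGraph α β).edgeSet) : ∃ a b, e = s(Sum.inl a, Sum.inr b) := by
  induction e using Sym2.ind with
  | _ p q =>
    rcases p with a | b <;> rcases q with a' | b' <;> simp at he
    · exact ⟨a, b', rfl⟩
    · exact ⟨a', b, Sym2.eq_swap⟩

lemma MonoKConnected.subsingleton_image_edgeSet_completeBipartiteGraph [Finite α] [Finite β]
    {k : ℕ} {c : Sym2 (α ⊕ β) → ℕ}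
    (hc : MonoKConnected (completeBipartiteGraph α β) k c)
    (hα : Nat.card α ≤ k) (hβ : Nat.card β ≤ k) :
    (c '' (completeBipartiteGraph α β).edgeSet).Subsingleton := by
  have hdeg_inl (a : α) : ((completeBipartiteGraph α β).neighborSet (.inl a)).ncard ≤ k := by
    rwa [completeBipartiteGraph_neighborSet_inl, Set.ncard_range_of_injective Sum.inr_injective]
  have hdeg_inr (b : β) : ((completeBipartiteGraph α β).neighborSet (.inr b)).ncard ≤ k := by
    rwa [completeBipartiteGraph_neighborSet_inr, Set.ncard_range_of_injective Sum.inl_injective]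
  have hcolour (a a' : α) (b b' : β) :
      c s(.inl a, .inr b) = c s(.inl a', .inr b') := by
    calc c s(.inl a, .inr b) = c s(.inl a', .inr b) := by
          rcases eq_or_ne a a' with rfl | ha
          · rfl
          · rw [hc.colour_eq (by simpa) (by simp) (hdeg_inl a) (hdeg_inl a') (by simp) (by simp),
              Sym2.eq_swap]
      _ = c s(.inl a', .inr b') := by
          rcases eq_or_ne b b' with rfl | hb
          · rfl
          · rw [Sym2.eq_swap,
              hc.colour_eq (by simpa) (by simp) (hdeg_inr b) (hdeg_inr b') (by simp) (by simp)]
  rintro _ ⟨e, he, rfl⟩ _ ⟨e', he', rfl⟩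
  obtain ⟨a, b, rfl⟩ := completeBipartiteGraph_exists_mk_eq_of_mem_edgeSet he
  obtain ⟨a', b', rfl⟩ := completeBipartiteGraph_exists_mk_eq_of_mem_edgeSet he'
  exact hcolour a a' b b'

/-- For `y ≠ b` the path `a, y, σ y, b` with `σ` the transposition of `a` and `b`, together with
the edge `ab`. -/
lemma completeBipartiteGraph_exists_internallyDisjoint_paths_inl_inr [DecidableEq α] (a b : α) :
    ∃ P : α → (completeBipartiteGraph α α).Walk (.inl a) (.inr b),
      (∀ y, (P y).IsPath) ∧ Pairwise fun y z => InternallyDisjoint (P y) (P z) := by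
  have hσ {y : α} (hy : y ≠ b) : Equiv.swap a b y ≠ a := by
    rwa [Ne, Equiv.swap_apply_eq_iff, Equiv.swap_apply_left]
  refine ⟨fun y => if y = b then .cons (by simp) .nil else
      .cons (v := .inr y) (by simp) (.cons (v := .inl (Equiv.swap a b y)) (by simp)
        (.cons (by simp) .nil)), fun y => ?_, fun y z hyz x hy hz => ?_⟩
  · dsimp only
    split_ifs with hy
    · simp [Walk.isPath_def]
    · simp [Walk.isPath_def, hy, (hσ hy).symm]
  · dsimp only at hy hz
    split_ifs at hy hz with hyb hzb hzb
    · exact absurd (hyb.trans hzb.symm) hyz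
    all_goals
      simp only [Walk.support_cons, Walk.support_nil, List.mem_cons, List.not_mem_nil,
        or_false] at hy hz
    · tauto
    · tauto
    · rcases hy with rfl | rfl | rfl | rfl <;> simp_all

lemma completeBipartiteGraph_exists_internallyDisjoint_paths [DecidableEq α] {u v : α ⊕ α}
    (hne : u ≠ v) :
    ∃ P : α → (completeBipartiteGraph α α).Walk u v,
      (∀ y, (P y).IsPath) ∧ Pairwise fun y z => InternallyDisjoint (P y) (P z) := by
  rcases u with a | a <;> rcases v with b | b
  · exact exists_internallyDisjoint_paths_of_adj_of_adj Sum.inr_injective hne (by simp) (by simp)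
  · exact completeBipartiteGraph_exists_internallyDisjoint_paths_inl_inr a b
  · obtain ⟨P, hpath, hdisj⟩ :=
      completeBipartiteGraph_exists_internallyDisjoint_paths_inl_inr b a
    exact ⟨fun y => (P y).reverse, fun y => (hpath y).reverse,
      fun y z hyz => (hdisj hyz).reverse⟩
  · exact exists_internallyDisjoint_paths_of_adj_of_adj Sum.inl_injective hne (by simp) (by simp)

lemma monoKConnected_completeBipartiteGraph_const [Fintype α] [DecidableEq α] (col : ℕ) :
    MonoKConnected (completeBipartiteGraph α α) (Fintype.card α) fun _ => col := by
  intro u v hne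
  obtain ⟨P, hpath, hdisj⟩ := completeBipartiteGraph_exists_internallyDisjoint_paths hne
  exact ⟨fun i => P ((Fintype.equivFin α).symm i), fun i => ⟨hpath _, col, fun _ _ => rfl⟩,
    hdisj.comp_of_injective (Fintype.equivFin α).symm.injective⟩

end CompleteBipartite

theorem stmt8 (k : ℕ) (hk : 2 ≤ k) :
    mck (completeBipartiteGraph (Fin k) (Fin k)) k = 1 := by
  have : NeZero k := ⟨by omega⟩
  refine IsGreatest.csSup_eq ⟨⟨fun _ => 0, ?_, ?_⟩, ?_⟩
  · simpa using monoKConnected_completeBipartiteGraph_const (α := Fin k) 0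
  · rw [Set.Nonempty.image_const ⟨s(.inl 0, .inr 0), by simp⟩, Set.ncard_singleton]
  · rintro _ ⟨c, hc, rfl⟩
    exact Set.ncard_le_one_iff_subsingleton.2
      (hc.subsingleton_image_edgeSet_completeBipartiteGraph (by simp) (by simp))
end

section
/- Let G be a graph on n ≥ 3 vertices with an edge-colouring using exactly r colours, and suppose f : (unordered pairs of vertices) → ℕ is such that any two vertices u, v are connected by f(u,v) internally vertex-disjoint monochromatic super-paths. Then e(G) ≥ ⌈w(f)/(n−2)⌉ + r − 1, where w(f) is the sum of f(u,v) over all unordered pairs. -/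
open SimpleGraph Finset

variable {V : Type*}

/-!
Count the triples `(a, x, w)` with `ax` an edge and `w ∉ {a, x}`: there are `2 e(G) (n - 2)`. Call
one *linked* if `a` reaches `w` in the colour class of `ax`. A colour whose class is disconnected
leaves at least `2 (n - 2)` triples unlinked: the edges of a component with `s` vertices,
`2 ≤ s < n`, aimed at the `n - s` vertices outside it. The first edges of the chosen super-paths
give `2 w(f)` distinct linked *tokens*. If the paths from `w` to `a` are the reverses of those from
`a` to `w`, then `(a, x, w)` and `(w, x, a)` are both tokens only when `x` is an inner vertex of a
single monochromatic path, so that `ax` and `wx` have the same colour. Hence at most half of the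
linked triples in which `ax` and `wx` have two different colours with connected classes are
tokens, and there are at least `4 (n - 2) (k - 1)` of those when `k` colours have connected
classes. Adding up, `4 w(f) + 4 (r - 1) (n - 2) ≤ 4 e(G) (n - 2)`.
-/

lemma sum_ne_mk_eq_two_mul_sum_not_isDiag [Fintype V] [DecidableEq V] (g : Sym2 V → ℕ) :
    ∑ a, ∑ w with a ≠ w, g s(a, w) = 2 * ∑ e with ¬ e.IsDiag, g e := by
  simp only [sum_filter, ← Fintype.sum_prod_type', mul_sum]
  rw [← sum_fiberwise (g := fun p : V × V => s(p.1, p.2))]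
  refine sum_congr rfl fun e _ => ?_
  induction e using Sym2.ind with
  | _ a b =>
  by_cases hab : a = b
  · subst hab
    simp
  · have hfibre : ({p | s(p.1, p.2) = s(a, b)} : Finset (V × V)) = {(a, b), (b, a)} := by
      ext ⟨x, y⟩
      simp [or_comm]
    rw [hfibre, sum_pair (by simp [hab])]
    simp [hab, Ne.symm hab, Sym2.eq_swap, two_mul]

lemma card_filter_triple [Fintype V] (P : V → V → V → Prop) [∀ a x w, Decidable (P a x w)] :
    #{t : V × V × V | P t.1 t.2.1 t.2.2} = ∑ a, ∑ x, #{w | P a x w} := by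
  simp only [card_filter, Fintype.sum_prod_type]

lemma two_mul_card_add_card_le_two_mul_card {α : Type*} [DecidableEq α] {T H D : Finset α}
    (σ : α → α) (hσ : σ.Injective) (hT : T ⊆ D) (hH : H ⊆ D)
    (hσH : ∀ t ∈ H, t ∈ T → σ t ∈ H \ T) : 2 * #T + #H ≤ 2 * #D := by
  have h1 : #(H ∩ T) ≤ #(H \ T) :=
    card_le_card_of_injOn σ (fun t ht => hσH t (mem_inter.1 ht).1 (mem_inter.1 ht).2) hσ.injOn
  have h2 := card_sdiff_add_card_inter H T
  have h3 := card_le_card (union_subset hT hH)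
  have h4 := card_union_add_card_inter T H
  rw [inter_comm] at h4
  omega

namespace SimpleGraph

lemma Connected.two_mul_card_sub_one_le_sum_degree [Fintype V] {H : SimpleGraph V}
    [DecidableRel H.Adj] (hH : H.Connected) : 2 * (Fintype.card V - 1) ≤ ∑ v, H.degree v := by
  have := hH.card_vert_le_card_edgeSet_add_one
  rw [Nat.card_eq_fintype_card, Nat.card_eq_fintype_card, ← edgeFinset_card] at this
  rw [sum_degrees_eq_twice_card_edges]
  omega

lemma two_mul_card_reachable_sub_one_le_sum_degree [Fintype V] [DecidableEq V]
    (H : SimpleGraph V) [DecidableRel H.Adj] (a : V) :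
    2 * (#{w | H.Reachable a w} - 1) ≤ ∑ w with H.Reachable a w, H.degree w := by
  classical
  set C := H.connectedComponentMk a
  have h := C.connected_toSimpleGraph.two_mul_card_sub_one_le_sum_degree
  have hdeg : ∀ v : C, C.toSimpleGraph.degree v = H.degree v := fun v => by
    convert degree_induce_of_neighborSet_subset (G := H) (s := C.supp) (v := v)
      fun w hw => (C.mem_supp_congr_adj hw).mp v.2 <;> rfl
  have hmem : ∀ w, H.Reachable a w ↔ w ∈ C := fun w =>
    (ConnectedComponent.eq.trans (by rw [reachable_comm])).symm
  simp only [hdeg, Fintype.card_subtype] at h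
  rwa [sum_subtype (p := (· ∈ C)) _ (by simp [hmem]), filter_congr fun w _ => hmem w]

lemma card_reachable_adj_not_reachable [Fintype V] [DecidableEq V] (H : SimpleGraph V)
    [DecidableRel H.Adj] (a : V) :
    #{t : V × V × V | H.Reachable a t.1 ∧ H.Adj t.1 t.2.1 ∧ ¬ H.Reachable a t.2.2} =
      (∑ w with H.Reachable a w, H.degree w) * (Fintype.card V - #{w | H.Reachable a w}) := by
  rw [card_filter_triple fun b x w => H.Reachable a b ∧ H.Adj b x ∧ ¬ H.Reachable a w, sum_mul,
    sum_filter]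
  refine sum_congr rfl fun b _ => ?_
  split_ifs with hb
  · have hfibre : ∀ x, #{w | H.Reachable a b ∧ H.Adj b x ∧ ¬ H.Reachable a w} =
        if H.Adj b x then Fintype.card V - #{w | H.Reachable a w} else 0 := by
      intro x
      split_ifs with h
      · rw [← card_compl, compl_filter]
        simp [hb, h]
      · simp [h]
    rw [sum_congr rfl fun x _ => hfibre x, sum_ite, sum_const_zero, add_zero, sum_const,
      smul_eq_mul, ← card_neighborFinset_eq_degree, neighborFinset_eq_filter]
  · simp [hb]

lemma two_mul_sub_two_le_card_reachable_adj_not_reachable [Fintype V] [DecidableEq V]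
    {H : SimpleGraph V} [DecidableRel H.Adj] (hH : ¬ H.Connected) {a x : V} (hax : H.Adj a x) :
    2 * (Fintype.card V - 2) ≤
      #{t : V × V × V | H.Reachable a t.1 ∧ H.Adj t.1 t.2.1 ∧ ¬ H.Reachable a t.2.2} := by
  set C : Finset V := {w | H.Reachable a w}
  have hC2 : 2 ≤ #C := by
    have : {a, x} ⊆ C := by
      intro w hw
      rcases mem_insert.1 hw with rfl | hw
      · simp [C]
      · simpa [C, mem_singleton.1 hw] using hax.reachable
    simpa [card_pair hax.ne] using card_le_card this
  have hCn : #C < Fintype.card V := by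
    refine lt_of_le_of_ne (card_le_univ C) fun h => hH ?_
    have hall : ∀ w, H.Reachable a w := fun w => by
      have hw : w ∈ C := eq_univ_of_card C h ▸ mem_univ w
      simpa [C] using hw
    have : Nonempty V := ⟨a⟩
    exact ⟨fun u v => (hall u).symm.trans (hall v)⟩
  obtain ⟨p, hp⟩ := Nat.exists_eq_add_of_le hC2
  obtain ⟨q, hq⟩ := Nat.exists_eq_add_of_lt hCn
  calc 2 * (Fintype.card V - 2) ≤ 2 * (#C - 1) * (Fintype.card V - #C) := by
        rw [show Fintype.card V - 2 = p + q + 1 by omega, show #C - 1 = p + 1 by omega,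
          show Fintype.card V - #C = q + 1 by omega]
        nlinarith [Nat.zero_le (p * q)]
    _ ≤ (∑ w ∈ C, H.degree w) * (Fintype.card V - #C) :=
        Nat.mul_le_mul_right _ (H.two_mul_card_reachable_sub_one_le_sum_degree a)
    _ = _ := (H.card_reachable_adj_not_reachable a).symm

lemma Walk.IsPath.snd_ne_of_two_le_length_s14 {u v : V} {G : SimpleGraph V} {p : G.Walk u v}
    (hp : p.IsPath) (hl : 2 ≤ p.length) : p.snd ≠ v := by
  intro h
  have := hp.getVert_injOn (show 1 ≤ p.length by omega)
    (show p.length ≤ p.length from le_rfl) (h.trans p.getVert_length.symm)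
  omega

end SimpleGraph

def colourClass (G : SimpleGraph V) (c : Sym2 V → ℕ) (k : ℕ) : SimpleGraph V where
  Adj a b := G.Adj a b ∧ c s(a, b) = k
  symm := ⟨fun _ _ h => ⟨h.1.symm, by rw [Sym2.eq_swap]; exact h.2⟩⟩
  loopless := ⟨fun _ h => h.1.ne rfl⟩

section SuperPaths

variable {G : SimpleGraph V} {c : Sym2 V → ℕ} {u v : V} {m k : ℕ}

lemma SimpleGraph.Walk.reachable_colourClass (p : G.Walk u v) (h : ∀ e ∈ p.edges, c e = k) :
    (colourClass G c k).Reachable u v := by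
  refine (p.transfer (colourClass G c k) fun e he => ?_).reachable
  induction e using Sym2.ind with
  | _ a b =>
    rw [SimpleGraph.mem_edgeSet]
    exact ⟨p.edges_subset_edgeSet he, h _ he⟩

def IsMonoSuperPathFamily (c : Sym2 V → ℕ) (P : Fin m → G.Walk u v) : Prop :=
  (∀ i, (P i).IsPath ∧ 2 ≤ (P i).length ∧ Monochromatic c (P i)) ∧
    Pairwise fun i j => InternallyDisjoint (P i) (P j)

def IsFirstStepSet (G : SimpleGraph V) (c : Sym2 V → ℕ) (u v : V) (m : ℕ) (X : Finset V) :
    Prop :=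
  #X = m ∧ ∀ x ∈ X, G.Adj u x ∧ x ≠ v ∧ (colourClass G c (c s(u, x))).Reachable u v

namespace IsMonoSuperPathFamily

variable {P : Fin m → G.Walk u v} (hP : IsMonoSuperPathFamily c P)
include hP

lemma reverse : IsMonoSuperPathFamily c fun i => (P i).reverse := by
  refine ⟨fun i => ?_, fun i j hij x hi hj => ?_⟩
  · obtain ⟨hpath, hl, k, hk⟩ := hP.1 i
    exact ⟨hpath.reverse, by simpa using hl, k, fun e he => hk e (by simpa using he)⟩
  · simp only [Walk.support_reverse, List.mem_reverse] at hi hj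
    exact (hP.2 hij x hi hj).symm

lemma not_nil (i : Fin m) : ¬ (P i).Nil := by
  have := (hP.1 i).2.1
  rw [Walk.not_nil_iff_lt_length]
  omega

lemma eq_of_snd_mem_support {i j : Fin m} (h : (P i).snd ∈ (P j).support) : i = j := by
  by_contra hne
  rcases hP.2 hne _ ((P i).getVert_mem_support 1) h with hu | hv
  · exact (Walk.adj_snd (hP.not_nil i)).ne hu.symm
  · exact (hP.1 i).1.snd_ne_of_two_le_length_s14 (hP.1 i).2.1 hv

lemma isFirstStepSet [DecidableEq V] :
    IsFirstStepSet G c u v m (univ.image fun i => (P i).snd) := by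
  have hinj : Function.Injective fun i => (P i).snd := fun i j h =>
    hP.eq_of_snd_mem_support ((show (P i).snd = (P j).snd from h) ▸ (P j).getVert_mem_support 1)
  refine ⟨by rw [card_image_of_injective _ hinj, card_univ, Fintype.card_fin], ?_⟩
  simp only [mem_image, mem_univ, true_and, forall_exists_index, forall_apply_eq_imp_iff]
  intro i
  obtain ⟨hpath, hl, k, hk⟩ := hP.1 i
  refine ⟨Walk.adj_snd (hP.not_nil i), hpath.snd_ne_of_two_le_length_s14 hl, ?_⟩
  rw [hk _ (Walk.mk_start_snd_mem_edges (hP.not_nil i))]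
  exact (P i).reachable_colourClass hk

lemma colour_eq {i j : Fin m} {x : V} (hi : (P i).snd = x) (hj : (P j).penultimate = x) :
    c s(u, x) = c s(v, x) := by
  obtain rfl : i = j :=
    hP.eq_of_snd_mem_support (by rw [hi, ← hj]; exact (P j).getVert_mem_support _)
  obtain ⟨-, -, k, hk⟩ := hP.1 i
  subst hi
  rw [hk _ (Walk.mk_start_snd_mem_edges (hP.not_nil i)), ← hj, Sym2.eq_swap,
    hk _ (Walk.mk_penultimate_end_mem_edges (hP.not_nil i))]

end IsMonoSuperPathFamily

lemma HasDisjointMonoSuperPaths.exists_isFirstStepSet [DecidableEq V]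
    (h : HasDisjointMonoSuperPaths G c u v m) :
    ∃ X Y : Finset V, IsFirstStepSet G c u v m X ∧ IsFirstStepSet G c v u m Y ∧
      ∀ x ∈ X, x ∈ Y → c s(u, x) = c s(v, x) := by
  obtain ⟨P, hP⟩ : ∃ P : Fin m → G.Walk u v, IsMonoSuperPathFamily c P := h
  refine ⟨_, _, hP.isFirstStepSet, hP.reverse.isFirstStepSet, fun x hx hy => ?_⟩
  simp only [mem_image, mem_univ, true_and, Walk.snd_reverse] at hx hy
  obtain ⟨i, hi⟩ := hx
  obtain ⟨j, hj⟩ := hy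
  exact hP.colour_eq hi hj

/-- Each unordered pair is oriented by a linear order on `V`; at its larger end the first steps
are read off the reversed paths, so that both ends see one and the same family of paths. -/
lemma exists_compatible_firstStepSets [DecidableEq V] {f : Sym2 V → ℕ}
    (hf : ∀ u v : V, u ≠ v → HasDisjointMonoSuperPaths G c u v (f s(u, v))) :
    ∃ τ : V → V → Finset V,
      (∀ a w, a ≠ w → IsFirstStepSet G c a w (f s(a, w)) (τ a w)) ∧
        ∀ a w, ∀ x ∈ τ a w, x ∈ τ w a → c s(a, x) = c s(w, x) := by
  choose X Y hX hY hXY using fun u v (h : u ≠ v) => (hf u v h).exists_isFirstStepSet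
  let _ : LinearOrder V := IsWellOrder.linearOrder WellOrderingRel
  refine ⟨fun a w => if h : a < w then X a w h.ne else if h' : w < a then Y w a h'.ne else ∅,
    fun a w hne => ?_, fun a w x hx hx' => ?_⟩
  · rcases hne.lt_or_gt with h | h
    · simpa [h] using hX a w h.ne
    · simpa [h, not_lt_of_gt h, Sym2.eq_swap] using hY w a h.ne
  · rcases lt_trichotomy a w with h | rfl | h
    · simp only [h, not_lt_of_gt h, dite_true, dite_false] at hx hx'
      exact hXY a w h.ne x hx hx'
    · rfl
    · simp only [h, not_lt_of_gt h, dite_true, dite_false] at hx hx'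
      exact (hXY w a h.ne x hx' hx).symm

end SuperPaths

section Counting

open scoped Classical

variable [Fintype V] [DecidableEq V] (G : SimpleGraph V) (c : Sym2 V → ℕ)

noncomputable def edgeColours : Finset ℕ := G.edgeFinset.image c

noncomputable def connectedColours : Finset ℕ :=
  {k ∈ edgeColours G c | (colourClass G c k).Connected}

noncomputable def disconnectedColours : Finset ℕ :=
  {k ∈ edgeColours G c | ¬ (colourClass G c k).Connected}

/-- A triple `(a, x, w)` is the edge `ax`, seen from `a`, aimed at a target `w ∉ {a, x}`. -/
noncomputable def edgeTriples : Finset (V × V × V) :=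
  {t | G.Adj t.1 t.2.1 ∧ t.2.2 ≠ t.1 ∧ t.2.2 ≠ t.2.1}

noncomputable def linkedTriples : Finset (V × V × V) :=
  {t ∈ edgeTriples G | (colourClass G c (c s(t.1, t.2.1))).Reachable t.1 t.2.2}

noncomputable def tokenTriples (τ : V → V → Finset V) : Finset (V × V × V) :=
  {t | t.1 ≠ t.2.2 ∧ t.2.1 ∈ τ t.1 t.2.2}

noncomputable def switchTriples : Finset (V × V × V) :=
  {t | G.Adj t.1 t.2.1 ∧ c s(t.1, t.2.1) ∈ connectedColours G c ∧ G.Adj t.2.2 t.2.1 ∧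
    c s(t.2.2, t.2.1) ∈ connectedColours G c ∧ c s(t.1, t.2.1) ≠ c s(t.2.2, t.2.1)}

lemma card_edgeTriples : #(edgeTriples G) = 2 * #G.edgeFinset * (Fintype.card V - 2) := by
  have hfibre : ∀ a x, #{w | G.Adj a x ∧ w ≠ a ∧ w ≠ x} =
      if G.Adj a x then Fintype.card V - 2 else 0 := by
    intro a x
    split_ifs with h
    · have : ({w | G.Adj a x ∧ w ≠ a ∧ w ≠ x} : Finset V) = {a, x}ᶜ := by ext; simp [h]
      rw [this, card_compl, card_pair h.ne]
    · simp [h]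
  rw [edgeTriples, card_filter_triple fun a x w => G.Adj a x ∧ w ≠ a ∧ w ≠ x,
    ← sum_degrees_eq_twice_card_edges, sum_mul]
  simp only [hfibre, sum_ite, sum_const_zero, add_zero, sum_const, smul_eq_mul]
  refine sum_congr rfl fun a _ => ?_
  rw [← card_neighborFinset_eq_degree, neighborFinset_eq_filter]

variable {G c} {f : Sym2 V → ℕ} {τ : V → V → Finset V}

lemma card_tokenTriples (hτ : ∀ a w, a ≠ w → #(τ a w) = f s(a, w)) :
    #(tokenTriples τ) = 2 * ∑ e with ¬ e.IsDiag, f e := by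
  rw [← sum_ne_mk_eq_two_mul_sum_not_isDiag, tokenTriples]
  simp only [card_filter, Fintype.sum_prod_type]
  refine sum_congr rfl fun a _ => ?_
  rw [sum_comm, sum_filter]
  refine sum_congr rfl fun w _ => ?_
  split_ifs with h
  · simp [h, ← hτ a w h]
  · simp [h]

lemma tokenTriples_subset_linkedTriples
    (hτ : ∀ a w, a ≠ w → IsFirstStepSet G c a w (f s(a, w)) (τ a w)) :
    tokenTriples τ ⊆ linkedTriples G c := by
  rintro ⟨a, x, w⟩ ht
  simp only [tokenTriples, mem_filter, mem_univ, true_and] at ht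
  obtain ⟨hadj, hxw, hreach⟩ := (hτ a w ht.1).2 x ht.2
  simp [linkedTriples, edgeTriples, hadj, hreach, Ne.symm ht.1, Ne.symm hxw]

lemma switchTriples_subset_linkedTriples : switchTriples G c ⊆ linkedTriples G c := by
  rintro ⟨a, x, w⟩ ht
  simp only [switchTriples, mem_filter, mem_univ, true_and] at ht
  obtain ⟨hax, hA, hwx, -, hne⟩ := ht
  have hwa : w ≠ a := by rintro rfl; exact hne rfl
  simp only [linkedTriples, edgeTriples, mem_filter, mem_univ, true_and]
  exact ⟨⟨hax, hwa, hwx.ne⟩, ((mem_filter.1 hA).2.preconnected a w)⟩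

lemma two_mul_card_tokenTriples_add_card_switchTriples_le
    (hτ : ∀ a w, a ≠ w → IsFirstStepSet G c a w (f s(a, w)) (τ a w))
    (hτc : ∀ a w, ∀ x ∈ τ a w, x ∈ τ w a → c s(a, x) = c s(w, x)) :
    2 * #(tokenTriples τ) + #(switchTriples G c) ≤ 2 * #(linkedTriples G c) := by
  refine two_mul_card_add_card_le_two_mul_card (fun t => (t.2.2, t.2.1, t.1)) ?_
    (tokenTriples_subset_linkedTriples hτ) switchTriples_subset_linkedTriples ?_
  · rintro ⟨a, x, w⟩ ⟨a', x', w'⟩ h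
    simp only [Prod.mk.injEq] at h
    simp [h]
  · rintro ⟨a, x, w⟩ hs ht
    simp only [switchTriples, tokenTriples, mem_sdiff, mem_filter, mem_univ, true_and] at hs ht ⊢
    obtain ⟨hax, haA, hwx, hwA, hne⟩ := hs
    exact ⟨⟨hwx, hwA, hax, haA, Ne.symm hne⟩, fun h => hne (hτc a w x ht.2 h.2)⟩

lemma exists_adj_colour_of_mem_connectedColours {k : ℕ} (hk : k ∈ connectedColours G c)
    (x : V) :
    ∃ w, G.Adj x w ∧ c s(x, w) = k := by
  simp only [connectedColours, edgeColours, mem_filter, mem_image] at hk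
  obtain ⟨⟨e, he, -⟩, hconn⟩ := hk
  have : Nontrivial V := by
    induction e using Sym2.ind with
    | _ a b => exact ⟨a, b, (mem_edgeFinset.1 he).ne⟩
  obtain ⟨w, hw⟩ :=
    (degree_pos_iff_exists_adj _ _).1 (hconn.preconnected.degree_pos_of_nontrivial x)
  exact ⟨w, hw⟩

lemma card_sub_one_le_card_switch_targets {a x : V} (hax : G.Adj a x)
    (hA : c s(a, x) ∈ connectedColours G c) :
    #(connectedColours G c) - 1 ≤ #{w | G.Adj a x ∧ c s(a, x) ∈ connectedColours G c ∧
      G.Adj w x ∧ c s(w, x) ∈ connectedColours G c ∧ c s(a, x) ≠ c s(w, x)} := by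
  rw [← card_erase_of_mem hA]
  refine le_trans (card_le_card (t := image (fun w => c s(w, x)) _) fun k hk => ?_) card_image_le
  obtain ⟨hka, hkA⟩ := mem_erase.1 hk
  obtain ⟨w, hxw, rfl⟩ := exists_adj_colour_of_mem_connectedColours hkA x
  have hwx : c s(w, x) = c s(x, w) := by rw [Sym2.eq_swap]
  rw [← hwx] at hka hkA
  exact mem_image.2 ⟨w, by simp [hax, hA, hxw.symm, hkA, Ne.symm hka], hwx⟩

lemma le_card_switchTriples :
    2 * (Fintype.card V - 1) * #(connectedColours G c) * (#(connectedColours G c) - 1) ≤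
      #(switchTriples G c) := by
  set A := connectedColours G c
  have hdeg : ∀ a, #{x | G.Adj a x ∧ c s(a, x) ∈ A} =
      ∑ k ∈ A, (colourClass G c k).degree a := by
    intro a
    rw [← filter_filter, ← sum_card_fiberwise_eq_card_filter]
    refine sum_congr rfl fun k _ => ?_
    rw [← card_neighborFinset_eq_degree, neighborFinset_eq_filter, filter_filter]
    congr 1
    ext
    simp only [mem_filter, mem_univ, true_and]
    rfl
  calc 2 * (Fintype.card V - 1) * #A * (#A - 1)
      = (∑ k ∈ A, 2 * (Fintype.card V - 1)) * (#A - 1) := by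
        rw [sum_const, smul_eq_mul, mul_comm #A]
    _ ≤ (∑ k ∈ A, ∑ a, (colourClass G c k).degree a) * (#A - 1) := by
        gcongr with k hk
        exact (mem_filter.1 hk).2.two_mul_card_sub_one_le_sum_degree
    _ = ∑ a, ∑ x, if G.Adj a x ∧ c s(a, x) ∈ A then #A - 1 else 0 := by
        simp only [sum_comm (s := A), sum_mul, ← hdeg, sum_ite, sum_const_zero, add_zero,
          sum_const, smul_eq_mul]
    _ ≤ _ := by
        rw [switchTriples, card_filter_triple fun a x w => G.Adj a x ∧ c s(a, x) ∈ A ∧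
          G.Adj w x ∧ c s(w, x) ∈ A ∧ c s(a, x) ≠ c s(w, x)]
        refine sum_le_sum fun a _ => sum_le_sum fun x _ => ?_
        split_ifs with h
        · exact card_sub_one_le_card_switch_targets h.1 h.2
        · exact Nat.zero_le _

lemma le_card_unlinked_of_mem_disconnectedColours {k : ℕ} (hk : k ∈ disconnectedColours G c) :
    2 * (Fintype.card V - 2) ≤
      #{t ∈ edgeTriples G \ linkedTriples G c | c s(t.1, t.2.1) = k} := by
  simp only [disconnectedColours, edgeColours, mem_filter, mem_image] at hk
  obtain ⟨⟨e, he, rfl⟩, hconn⟩ := hk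
  induction e using Sym2.ind with
  | _ a₀ x₀ =>
  refine (two_mul_sub_two_le_card_reachable_adj_not_reachable hconn
    (x := x₀) ⟨mem_edgeFinset.1 he, rfl⟩).trans (card_le_card ?_)
  rintro ⟨a, x, w⟩ ht
  simp only [mem_filter, mem_univ, true_and] at ht
  obtain ⟨ha, ⟨hax, hcol⟩, hw⟩ := ht
  have hx := ha.trans (Adj.reachable ⟨hax, hcol⟩)
  simp only [edgeTriples, linkedTriples, mem_sdiff, mem_filter, mem_univ, true_and, hcol]
  refine ⟨⟨⟨hax, ?_, ?_⟩, fun h => hw (ha.trans h.2)⟩, trivial⟩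
  · rintro rfl
    exact hw ha
  · rintro rfl
    exact hw hx

lemma le_card_sdiff_linkedTriples :
    2 * (Fintype.card V - 2) * #(disconnectedColours G c) ≤
      #(edgeTriples G \ linkedTriples G c) := by
  calc 2 * (Fintype.card V - 2) * #(disconnectedColours G c)
      = ∑ k ∈ disconnectedColours G c, 2 * (Fintype.card V - 2) := by
        rw [sum_const, smul_eq_mul, mul_comm]
    _ ≤ ∑ k ∈ disconnectedColours G c,
        #{t ∈ edgeTriples G \ linkedTriples G c | c s(t.1, t.2.1) = k} :=
        sum_le_sum fun k hk => le_card_unlinked_of_mem_disconnectedColours hk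
    _ ≤ _ := by
        rw [sum_card_fiberwise_eq_card_filter]
        exact card_filter_le _ _

theorem sum_add_ncard_colours_mul_le
    (hf : ∀ u v : V, u ≠ v → HasDisjointMonoSuperPaths G c u v (f s(u, v))) :
    (∑ e with ¬ e.IsDiag, f e) + (c '' G.edgeSet).ncard * (Fintype.card V - 2) ≤
      (G.edgeSet.ncard + 1) * (Fintype.card V - 2) := by
  obtain ⟨τ, hτ, hτc⟩ := exists_compatible_firstStepSets hf
  have hcolours : (c '' G.edgeSet).ncard =
      #(connectedColours G c) + #(disconnectedColours G c) := by
    rw [connectedColours, disconnectedColours, card_filter_add_card_filter_not,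
      edgeColours, ← Set.ncard_coe_finset, coe_image, coe_edgeFinset]
  have hedges : G.edgeSet.ncard = #G.edgeFinset := by
    rw [← Set.ncard_coe_finset, coe_edgeFinset]
  have hsplit : #(linkedTriples G c) + #(edgeTriples G \ linkedTriples G c) =
      2 * #G.edgeFinset * (Fintype.card V - 2) := by
    rw [add_comm, card_sdiff_add_card_eq_card
      (show linkedTriples G c ⊆ edgeTriples G from filter_subset _ _), card_edgeTriples]
  have htok := card_tokenTriples fun a w h => (hτ a w h).1
  have hswitch := two_mul_card_tokenTriples_add_card_switchTriples_le hτ hτc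
  have hA := le_card_switchTriples (G := G) (c := c)
  have hB := le_card_sdiff_linkedTriples (G := G) (c := c)
  rw [hcolours, hedges]
  generalize Fintype.card V = n at *
  generalize #(connectedColours G c) = a at *
  have hkey : 4 * (n - 2) * (a - 1) ≤ 2 * (n - 1) * a * (a - 1) := by
    rcases Nat.lt_or_ge a 2 with h | h
    · simp [Nat.sub_eq_zero_of_le (by omega : a ≤ 1)]
    · have : 2 * (n - 2) ≤ (n - 1) * a := le_trans (by omega) (Nat.mul_le_mul_left _ h)
      calc 4 * (n - 2) * (a - 1) = 2 * (2 * (n - 2)) * (a - 1) := by ring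
        _ ≤ 2 * ((n - 1) * a) * (a - 1) := by gcongr
        _ = _ := by ring
  have ha : a * (n - 2) ≤ (a - 1) * (n - 2) + (n - 2) := by
    rw [← Nat.succ_mul]
    exact Nat.mul_le_mul_right _ (by omega)
  nlinarith

end Counting

theorem stmt14 [Fintype V] [DecidableEq V] (G : SimpleGraph V) (hn : 3 ≤ Fintype.card V)
    (c : Sym2 V → ℕ) (r : ℕ) (hr : (c '' G.edgeSet).ncard = r)
    (f : Sym2 V → ℕ)
    (hf : ∀ u v : V, u ≠ v → HasDisjointMonoSuperPaths G c u v (f s(u, v))) :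
    ⌈((∑ e ∈ Finset.univ.filter (fun e : Sym2 V => ¬ e.IsDiag), f e : ℕ) : ℚ) /
        ((Fintype.card V : ℚ) - 2)⌉ + (r : ℤ) - 1 ≤ (G.edgeSet.ncard : ℤ) := by
  have hcount := sum_add_ncard_colours_mul_le hf
  rw [hr] at hcount
  have hm : ((Fintype.card V - 2 : ℕ) : ℚ) = Fintype.card V - 2 := by
    rw [Nat.cast_sub (by omega)]
    norm_num
  have hpos : (0 : ℚ) < Fintype.card V - 2 := by
    rw [← hm]
    exact_mod_cast (by omega : 0 < Fintype.card V - 2)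
  calc _ ≤ (G.edgeSet.ncard + 1 - r : ℤ) + r - 1 := by
        gcongr
        refine Int.ceil_le.2 ?_
        rw [div_le_iff₀ hpos, ← hm]
        push_cast
        have := (Nat.cast_le (α := ℚ)).2 hcount
        push_cast at this
        linarith
    _ = _ := by ring
end
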